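/- For every k ≥ 1, consider the pair of genomes forming a single M-shaped path with k adjacencies in G1: on extremities x_1, …, x_{2k}, take Π1 = {{x_{2i-1}, x_{2i}} : 1 ≤ i ≤ k} and Π2 = {{x_{2i}, x_{2i+1}} : 1 ≤ i ≤ k-1}. Then the number of most parsimonious SCJ scenarios from G1 to G2 equals A_{2k-1}, the number of alternating permutations of size 2k-1. -/

import Mathlib

/-- A genome on an extremity type `V`: a finite set of adjacencies (unordered pairs of
distinct extremities) that are pairwise disjoint (a partial matching). -/
structure Genome (V : Type*) where
  adj : Finset (Sym2 V)
  not_isDiag : ∀ p ∈ adj, ¬ p.IsDiag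
  disj : ∀ p ∈ adj, ∀ q ∈ adj, p ≠ q → ∀ x, x ∈ p → x ∉ q

instance {V : Type*} : Inhabited (Genome V) :=
  ⟨⟨∅, by simp, by simp⟩⟩

variable {V : Type*} [DecidableEq V]

/-- The step from `G` to `G'` is a cut removing the adjacency `p`. -/
def CutsAdj (G G' : Genome V) (p : Sym2 V) : Prop :=
  p ∈ G.adj ∧ G'.adj = G.adj.erase p

/-- The step from `G` to `G'` is a join adding the adjacency `p`
(validity of `G'` forces `p` to be a pair of distinct, currently unmatched extremities). -/
def JoinsAdj (G G' : Genome V) (p : Sym2 V) : Prop :=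
  p ∉ G.adj ∧ G'.adj = insert p G.adj

/-- A single SCJ operation. -/
def SCJStep (G G' : Genome V) : Prop :=
  ∃ p, CutsAdj G G' p ∨ JoinsAdj G G' p

/-- An SCJ scenario from `G1` to `G2`: a finite sequence of genomes starting at `G1`,
ending at `G2`, consecutive ones differing by a single SCJ operation.  A scenario
represented by a list `L` has `L.length - 1` operations. -/
def IsScenario (G1 G2 : Genome V) (L : List (Genome V)) : Prop :=
  L.head? = some G1 ∧ L.getLast? = some G2 ∧ L.Chain' SCJStep

/-- The SCJ distance: the minimum number of operations in a scenario from `G1` to `G2`. -/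
noncomputable def dSCJ (G1 G2 : Genome V) : ℕ :=
  sInf {n | ∃ L, IsScenario G1 G2 L ∧ L.length = n + 1}

/-- A most parsimonious SCJ scenario. -/
def IsMPS (G1 G2 : Genome V) (L : List (Genome V)) : Prop :=
  IsScenario G1 G2 L ∧ L.length = dSCJ G1 G2 + 1

/-- The number of most parsimonious SCJ scenarios from `G1` to `G2`. -/
noncomputable def NumMPS (G1 G2 : Genome V) : ℕ :=
  {L | IsMPS G1 G2 L}.ncard

/-- The `i`-th step of the scenario `L` (steps indexed from `0`) cuts adjacency `p`. -/
def StepCut (L : List (Genome V)) (i : ℕ) (p : Sym2 V) : Prop :=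
  i + 1 < L.length ∧ CutsAdj (L.getD i default) (L.getD (i + 1) default) p

/-- The `i`-th step of the scenario `L` (steps indexed from `0`) joins adjacency `p`. -/
def StepJoin (L : List (Genome V)) (i : ℕ) (p : Sym2 V) : Prop :=
  i + 1 < L.length ∧ JoinsAdj (L.getD i default) (L.getD (i + 1) default) p

/-- `c` is an alternating (up-down) permutation:
`c 0 < c 1 > c 2 < c 3 > …` (i.e. in 1-based notation `c₁ < c₂ > c₃ < …`). -/
def IsAltPerm {n : ℕ} (c : Equiv.Perm (Fin n)) : Prop :=
  ∀ i : ℕ, ∀ h : i + 1 < n,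
    if i % 2 = 0 then c ⟨i, by omega⟩ < c ⟨i + 1, h⟩
    else c ⟨i + 1, h⟩ < c ⟨i, by omega⟩

/-- `A n`, the number of alternating permutations of size `n` (with `A 0 = 1`). -/
noncomputable def altPermCount (n : ℕ) : ℕ :=
  Nat.card {c : Equiv.Perm (Fin n) // IsAltPerm c}

/-!
Number the edges of the path `1 — 2 — ⋯ — 2k` by `j = 0, …, n - 1` with `n = 2k - 1`: the
even edges are the adjacencies of `G1`, the odd ones those of `G2`. Every SCJ operation
toggles a single adjacency, so a scenario has at least `n = |Π1 ∆ Π2|` operations, and one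
with exactly `n` operations toggles each edge once: cutting the even edges and joining the
odd ones in some order, i.e. it is a schedule `c : Fin n ≃ Fin n` (edge `j` at time `c j`).
The intermediate genomes are partial matchings exactly when each join `j` comes after the
cuts of its neighbours `j ± 1`, i.e. `c (j - 1) < c j > c (j + 1)` for odd `j`, which says
that `c` is alternating.
-/

open Finset Function

attribute [ext] Genome

section Toggle

variable {α : Type*} [DecidableEq α]

lemma Finset.symmDiff_singleton_of_notMem {s : Finset α} {a : α} (h : a ∉ s) :
    symmDiff s {a} = insert a s := by
  ext x; by_cases x = a <;> simp_all [mem_symmDiff]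

lemma Finset.symmDiff_singleton_of_mem {s : Finset α} {a : α} (h : a ∈ s) :
    symmDiff s {a} = s.erase a := by
  ext x; by_cases x = a <;> simp_all [mem_symmDiff]

lemma Finset.card_symmDiff_le_add (s t u : Finset α) :
    #(symmDiff s u) ≤ #(symmDiff s t) + #(symmDiff t u) :=
  (card_le_card (symmDiff_triangle s t u)).trans (card_union_le _ _)

variable {H : ℕ → Finset α} {m : ℕ}

lemma card_symmDiff_le_of_toggle (hH : ∀ s < m, ∃ p, H (s + 1) = symmDiff (H s) {p})
    {a b : ℕ} (hab : a ≤ b) (hbm : b ≤ m) : #(symmDiff (H a) (H b)) ≤ b - a := by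
  induction b, hab using Nat.le_induction with
  | base => simp
  | succ b hab ih =>
    obtain ⟨p, hp⟩ := hH b (by omega)
    have hstep : #(symmDiff (H b) (H (b + 1))) = 1 := by
      rw [hp, symmDiff_symmDiff_cancel_left, card_singleton]
    have := card_symmDiff_le_add (H a) (H b) (H (b + 1))
    have := ih (by omega)
    omega

/-- If `m` toggles change `H 0` into a set differing from it in `m` elements, no element
is ever toggled back. -/
lemma exists_insert_of_toggle (hH : ∀ s < m, ∃ p, H (s + 1) = symmDiff (H s) {p})
    (hm : #(symmDiff (H 0) (H m)) = m) {s : ℕ} (hs : s < m) :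
    ∃ p ∉ symmDiff (H 0) (H s),
      symmDiff (H 0) (H (s + 1)) = insert p (symmDiff (H 0) (H s)) := by
  have hcard : ∀ t ≤ m, #(symmDiff (H 0) (H t)) = t := fun t ht => by
    have := card_symmDiff_le_of_toggle hH (Nat.zero_le t) ht
    have := card_symmDiff_le_of_toggle hH ht le_rfl
    have := card_symmDiff_le_add (H 0) (H t) (H m)
    omega
  obtain ⟨p, hp⟩ := hH s hs
  have hsucc : symmDiff (H 0) (H (s + 1)) = symmDiff (symmDiff (H 0) (H s)) {p} := by
    rw [hp, symmDiff_assoc]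
  by_cases hmem : p ∈ symmDiff (H 0) (H s)
  · have := hcard (s + 1) hs
    rw [hsucc, symmDiff_singleton_of_mem hmem, card_erase_of_mem hmem, hcard s hs.le] at this
    omega
  · exact ⟨p, hmem, by rw [hsucc, symmDiff_singleton_of_notMem hmem]⟩

end Toggle

lemma scjStep_iff {G G' : Genome V} : SCJStep G G' ↔ ∃ p, G'.adj = symmDiff G.adj {p} := by
  refine exists_congr fun p => ⟨?_, fun h => ?_⟩
  · rintro (⟨hp, h⟩ | ⟨hp, h⟩)
    · rw [h, symmDiff_singleton_of_mem hp]
    · rw [h, symmDiff_singleton_of_notMem hp]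
  · by_cases hp : p ∈ G.adj
    · exact .inl ⟨hp, by rw [h, symmDiff_singleton_of_mem hp]⟩
    · exact .inr ⟨hp, by rw [h, symmDiff_singleton_of_notMem hp]⟩

lemma isScenario_iff_getD {G1 G2 : Genome V} {L : List (Genome V)} :
    IsScenario G1 G2 L ↔ L ≠ [] ∧ L.getD 0 default = G1 ∧
      L.getD (L.length - 1) default = G2 ∧
      ∀ s, s + 1 < L.length → SCJStep (L.getD s default) (L.getD (s + 1) default) := by
  rw [IsScenario, List.head?_eq_getElem?, List.getLast?_eq_getElem?]
  rcases L with _ | ⟨G, L⟩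
  · simp
  have hget : ∀ s (hs : s < (G :: L).length), (G :: L).getD s default = (G :: L)[s] :=
    fun s hs => List.getD_eq_getElem _ _ hs
  rw [List.getElem?_eq_getElem (by simp), List.getElem?_eq_getElem (by simp), hget _ (by simp),
    hget _ (by simp)]
  simp only [Option.some_inj, ne_eq, reduceCtorEq, not_false_eq_true, true_and]
  refine and_congr_right fun _ => and_congr_right fun _ => List.isChain_iff_getElem.trans ?_
  refine forall_congr' fun s => forall_congr' fun hs => ?_
  rw [hget s (by omega), hget (s + 1) hs]

lemma IsScenario.exists_toggle {G1 G2 : Genome V} {L : List (Genome V)}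
    (hL : IsScenario G1 G2 L) :
    ∀ s < L.length - 1, ∃ p,
      (L.getD (s + 1) default).adj = symmDiff (L.getD s default).adj {p} := fun s hs =>
  scjStep_iff.mp ((isScenario_iff_getD.mp hL).2.2.2 s (by omega))

lemma IsScenario.card_symmDiff_lt_length {G1 G2 : Genome V} {L : List (Genome V)}
    (hL : IsScenario G1 G2 L) : #(symmDiff G1.adj G2.adj) < L.length := by
  obtain ⟨hne, h0, hlast, -⟩ := isScenario_iff_getD.mp hL
  have := card_symmDiff_le_of_toggle (H := fun s => (L.getD s default).adj) hL.exists_toggle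
    (Nat.zero_le _) le_rfl
  rw [h0, hlast] at this
  have := List.length_pos_iff.mpr hne
  omega

lemma dSCJ_eq_card_symmDiff {G1 G2 : Genome V}
    (h : ∃ L, IsScenario G1 G2 L ∧ L.length = #(symmDiff G1.adj G2.adj) + 1) :
    dSCJ G1 G2 = #(symmDiff G1.adj G2.adj) := by
  refine le_antisymm (Nat.sInf_le h) (le_csInf ⟨_, h⟩ ?_)
  rintro d ⟨L, hL, hlen⟩
  have := hL.card_symmDiff_lt_length
  omega

lemma IsScenario.exists_insert_of_length {G1 G2 : Genome V} {L : List (Genome V)}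
    (hL : IsScenario G1 G2 L) (hlen : L.length = #(symmDiff G1.adj G2.adj) + 1) {s : ℕ}
    (hs : s < #(symmDiff G1.adj G2.adj)) :
    ∃ p ∉ symmDiff G1.adj (L.getD s default).adj,
      symmDiff G1.adj (L.getD (s + 1) default).adj =
        insert p (symmDiff G1.adj (L.getD s default).adj) := by
  obtain ⟨-, h0, hlast, -⟩ := isScenario_iff_getD.mp hL
  have := exists_insert_of_toggle (H := fun s => (L.getD s default).adj) hL.exists_toggle
    (by simp only [h0, hlast]; omega) (show s < L.length - 1 by omega)
  simpa only [h0] using this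

section Schedule

variable {n : ℕ}

/-- The operations scheduled before time `s`, when operation `j` is performed at time `c j`. -/
def opsBefore (c : Equiv.Perm (Fin n)) (s : ℕ) : Finset (Fin n) :=
  univ.filter fun j => (c j : ℕ) < s

lemma opsBefore_zero (c : Equiv.Perm (Fin n)) : opsBefore c 0 = ∅ := by
  simp [opsBefore]

lemma opsBefore_of_le (c : Equiv.Perm (Fin n)) {s : ℕ} (hs : n ≤ s) :
    opsBefore c s = univ := by
  ext j; simp only [opsBefore, mem_filter, mem_univ, true_and, iff_true]; omega

lemma opsBefore_succ (c : Equiv.Perm (Fin n)) {s : ℕ} (hs : s < n) :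
    opsBefore c (s + 1) = insert (c.symm ⟨s, hs⟩) (opsBefore c s) := by
  ext j
  simp only [opsBefore, mem_insert, mem_filter, mem_univ, true_and, Equiv.eq_symm_apply,
    Fin.ext_iff]
  omega

lemma symm_notMem_opsBefore (c : Equiv.Perm (Fin n)) {s : ℕ} (hs : s < n) :
    c.symm ⟨s, hs⟩ ∉ opsBefore c s := by
  simp [opsBefore]

lemma eq_of_opsBefore_eq {c c' : Equiv.Perm (Fin n)}
    (h : ∀ s ≤ n, opsBefore c s = opsBefore c' s) : c = c' := by
  ext j
  have hmem : ∀ s ≤ n, (c j : ℕ) < s ↔ (c' j : ℕ) < s := fun s hs => by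
    simpa [opsBefore] using congrArg (j ∈ ·) (h s hs)
  have := hmem (c j + 1) (c j).isLt
  have := hmem (c' j + 1) (c' j).isLt
  omega

lemma exists_injective_of_insert_chain {α : Type*} [DecidableEq α]
    {D : ℕ → Finset α} (h0 : D 0 = ∅) (hstep : ∀ s < n, ∃ p ∉ D s, D (s + 1) = insert p (D s)) :
    ∃ τ : Fin n → α, Injective τ ∧
      ∀ s ≤ n, D s = (univ.filter fun t : Fin n => (t : ℕ) < s).image τ := by
  choose p hpD hDp using hstep
  let τ : Fin n → α := fun t => p t t.2
  have hprefix : ∀ s ≤ n, D s = (univ.filter fun t : Fin n => (t : ℕ) < s).image τ := by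
    intro s hs
    induction s with
    | zero => simp [h0]
    | succ s ih =>
      rw [hDp s hs, ih (by omega)]
      ext x
      simp only [mem_insert, mem_image, mem_filter, mem_univ, true_and]
      constructor
      · rintro (rfl | ⟨t, ht, rfl⟩)
        exacts [⟨⟨s, hs⟩, by simp, rfl⟩, ⟨t, by omega, rfl⟩]
      · rintro ⟨t, ht, rfl⟩
        rcases Nat.lt_succ_iff_lt_or_eq.mp ht with ht | ht
        · exact .inr ⟨t, ht, rfl⟩
        · obtain rfl : t = ⟨s, hs⟩ := Fin.ext ht
          exact .inl rfl
  refine ⟨τ, fun t t' htt' => ?_, hprefix⟩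
  by_contra hne
  wlog hlt : (t : ℕ) < t' generalizing t t'
  · exact this t' t htt'.symm (Ne.symm hne) (by omega)
  refine hpD t' t'.2 ?_
  rw [hprefix t' t'.2.le]
  exact mem_image.mpr ⟨t, by simpa using hlt, htt'⟩

lemma exists_perm_of_insert_chain {α : Type*} [DecidableEq α] {f : Fin n → α}
    {D : ℕ → Finset α} (h0 : D 0 = ∅) (hn : D n = univ.image f)
    (hstep : ∀ s < n, ∃ p ∉ D s, D (s + 1) = insert p (D s)) :
    ∃ c : Equiv.Perm (Fin n), ∀ s ≤ n, D s = (opsBefore c s).image f := by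
  obtain ⟨τ, hτ, hprefix⟩ := exists_injective_of_insert_chain h0 hstep
  have hrange : ∀ t : Fin n, ∃ j, f j = τ t := fun t => by
    have : τ t ∈ D n := by rw [hprefix n le_rfl]; exact mem_image_of_mem τ (by simp)
    simpa [hn] using this
  choose σ hσ using hrange
  have hσ_inj : Injective σ := fun t t' h => hτ (by simp only [← hσ, h])
  let e := Equiv.ofBijective σ (Finite.injective_iff_bijective.mp hσ_inj)
  refine ⟨e.symm, fun s hs => ?_⟩
  rw [hprefix s hs, opsBefore]
  ext x
  simp only [mem_image, mem_filter, mem_univ, true_and]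
  constructor
  · rintro ⟨t, ht, rfl⟩
    exact ⟨σ t, by simpa [e, Equiv.ofBijective_symm_apply_apply] using ht, hσ t⟩
  · rintro ⟨j, hj, rfl⟩
    exact ⟨e.symm j, hj, by rw [← hσ]; exact congrArg f (e.apply_symm_apply j)⟩

lemma isAltPerm_iff_odd_peaks {c : Equiv.Perm (Fin n)} :
    IsAltPerm c ↔
      ∀ i j : Fin n, (j : ℕ) % 2 = 1 → ((i : ℕ) + 1 = j ∨ (j : ℕ) + 1 = i) → c i < c j := by
  constructor
  · rintro h ⟨i, hi⟩ ⟨j, hj⟩ hj2 (hij | hij) <;> simp only at hj2 hij <;> subst hij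
    · simpa [show i % 2 = 0 by omega] using h i hj
    · simpa [hj2] using h j hi
  · intro h i hi
    split_ifs with hi2
    · exact h ⟨i, _⟩ ⟨i + 1, hi⟩ (by simp only; omega) (.inl rfl)
    · exact h ⟨i + 1, hi⟩ ⟨i, _⟩ (by simp only; omega) (.inr rfl)

end Schedule

lemma exists_isAltPerm (n : ℕ) : ∃ c : Equiv.Perm (Fin n), IsAltPerm c := by
  -- the odd positions receive the largest values
  let f : Fin n → Fin n := fun j =>
    ⟨if (j : ℕ) % 2 = 0 then j / 2 else (n + 1) / 2 + j / 2, by split_ifs <;> omega⟩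
  have hf : Injective f := fun i j h => by
    simp only [f, Fin.mk.injEq] at h
    split_ifs at h <;> omega
  refine ⟨Equiv.ofBijective f (Finite.injective_iff_bijective.mp hf),
    isAltPerm_iff_odd_peaks.mpr fun i j hj hij => ?_⟩
  simp only [Equiv.ofBijective_apply, f, Fin.mk_lt_mk]
  split_ifs <;> omega

def IsMatching {W : Type*} (A : Finset (Sym2 W)) : Prop :=
  ∀ p ∈ A, ∀ q ∈ A, p ≠ q → ∀ x, x ∈ p → x ∉ q

namespace MPath

variable {n : ℕ}

def edge (j : Fin n) : Sym2 ℕ := s((j : ℕ) + 1, (j : ℕ) + 2)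

lemma edge_injective : Injective (edge (n := n)) := by
  intro i j h
  simp only [edge, Sym2.eq_iff] at h
  omega

variable (n) in
def evens : Finset (Fin n) := univ.filter fun j => (j : ℕ) % 2 = 0

variable (n) in
/-- The adjacencies present once the operations in `D` have been performed: an even edge
is cut, an odd edge is joined. -/
def adjOf (D : Finset (Fin n)) : Finset (Sym2 ℕ) := (symmDiff (evens n) D).image edge

lemma adjOf_injective : Injective (adjOf n) :=
  (image_injective edge_injective).comp (symmDiff_right_injective _)

lemma adjOf_empty : adjOf n ∅ = (evens n).image edge :=
  congrArg _ (symmDiff_eq_left.mpr rfl)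

lemma adjOf_univ : adjOf n univ = (univ.filter fun j : Fin n => (j : ℕ) % 2 = 1).image edge := by
  rw [adjOf]
  congr 1
  ext j
  simp only [evens, mem_symmDiff, mem_filter, mem_univ, true_and, not_true_eq_false,
    and_false, false_or]
  omega

lemma adjOf_eq_symmDiff (D : Finset (Fin n)) :
    adjOf n D = symmDiff (adjOf n ∅) (D.image edge) := by
  rw [adjOf, adjOf_empty, image_symmDiff _ _ edge_injective]

lemma symmDiff_adjOf_empty_univ :
    symmDiff (adjOf n ∅) (adjOf n univ) = (univ : Finset (Fin n)).image edge := by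
  rw [adjOf_eq_symmDiff univ, symmDiff_symmDiff_cancel_left]

/-- Every performed join `j` (odd) comes with the cuts of both neighbouring edges. -/
def Feasible (D : Finset (Fin n)) : Prop :=
  ∀ i j : Fin n, (j : ℕ) % 2 = 1 → ((i : ℕ) + 1 = j ∨ (j : ℕ) + 1 = i) → j ∈ D → i ∈ D

lemma isMatching_image_edge_iff {S : Finset (Fin n)} :
    IsMatching (S.image edge) ↔ ∀ i ∈ S, ∀ j ∈ S, (i : ℕ) + 1 ≠ j := by
  simp only [IsMatching, mem_image]
  constructor
  · intro h i hi j hj hij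
    refine h _ ⟨i, hi, rfl⟩ _ ⟨j, hj, rfl⟩ (fun he => ?_) ((j : ℕ) + 1) ?_ ?_
    · have := edge_injective he; omega
    · simp only [edge, Sym2.mem_iff, Nat.add_right_cancel_iff]; omega
    · simp [edge]
  · rintro h _ ⟨i, hi, rfl⟩ _ ⟨j, hj, rfl⟩ hne x hxi hxj
    have hij : i ≠ j := fun h' => hne (h' ▸ rfl)
    have := h i hi j hj
    have := h j hj i hi
    simp only [edge, Sym2.mem_iff] at hxi hxj
    omega

lemma isMatching_adjOf_iff {D : Finset (Fin n)} : IsMatching (adjOf n D) ↔ Feasible D := by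
  rw [adjOf, isMatching_image_edge_iff]
  simp only [Feasible, evens, mem_symmDiff, mem_filter, mem_univ, true_and]
  constructor
  · intro h i j hj hij hjD
    by_contra hiD
    rcases hij with hij | hij
    · exact h i (.inl ⟨by omega, hiD⟩) j (.inr ⟨hjD, by omega⟩) hij
    · exact h j (.inr ⟨hjD, by omega⟩) i (.inl ⟨by omega, hiD⟩) hij
  · intro h i hi j hj hij
    rcases hi with ⟨hi2, hiD⟩ | ⟨hiD, hi2⟩ <;> rcases hj with ⟨hj2, hjD⟩ | ⟨hjD, hj2⟩
    all_goals first
      | omega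
      | exact hiD (h i j (by omega) (.inl hij) hjD)
      | exact hjD (h j i (by omega) (.inr hij) hiD)

lemma not_isDiag_of_mem_adjOf {D : Finset (Fin n)} {p : Sym2 ℕ} (hp : p ∈ adjOf n D) :
    ¬p.IsDiag := by
  obtain ⟨j, -, rfl⟩ := mem_image.mp hp
  simp [edge]

def genome (D : Finset (Fin n)) (hD : Feasible D) : Genome ℕ :=
  ⟨adjOf n D, fun _ => not_isDiag_of_mem_adjOf, isMatching_adjOf_iff.mpr hD⟩

lemma adjOf_insert {D : Finset (Fin n)} {j : Fin n} (hj : j ∉ D) :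
    adjOf n (insert j D) = symmDiff (adjOf n D) {edge j} := by
  have : edge j ∉ D.image edge := by simpa [edge_injective.eq_iff] using hj
  rw [adjOf_eq_symmDiff, adjOf_eq_symmDiff D, image_insert, symmDiff_assoc,
    symmDiff_singleton_of_notMem this]

lemma forall_feasible_opsBefore_iff {c : Equiv.Perm (Fin n)} :
    (∀ s ≤ n, Feasible (opsBefore c s)) ↔
      ∀ i j : Fin n, (j : ℕ) % 2 = 1 → ((i : ℕ) + 1 = j ∨ (j : ℕ) + 1 = i) → c i < c j := by
  simp only [Feasible, opsBefore, mem_filter, mem_univ, true_and, Fin.lt_def]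
  constructor
  · intro h i j hj hij
    have := h (c j + 1) (c j).2 i j hj hij (by omega)
    have : c i ≠ c j := fun h' => by have := c.injective h'; omega
    omega
  · intro h s _ i j hj hij hjs
    have := h i j hj hij
    omega

lemma isAltPerm_iff_feasible {c : Equiv.Perm (Fin n)} :
    IsAltPerm c ↔ ∀ s ≤ n, Feasible (opsBefore c s) :=
  isAltPerm_iff_odd_peaks.trans forall_feasible_opsBefore_iff.symm

def scenario (c : Equiv.Perm (Fin n)) (hc : IsAltPerm c) : List (Genome ℕ) :=
  List.ofFn fun s : Fin (n + 1) => genome (opsBefore c s) (isAltPerm_iff_feasible.mp hc s s.is_le)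

lemma length_scenario (c : Equiv.Perm (Fin n)) (hc : IsAltPerm c) :
    (scenario c hc).length = n + 1 :=
  List.length_ofFn

lemma adj_getD_scenario (c : Equiv.Perm (Fin n)) (hc : IsAltPerm c) {s : ℕ} (hs : s ≤ n) :
    ((scenario c hc).getD s default).adj = adjOf n (opsBefore c s) := by
  rw [List.getD_eq_getElem _ _ (by rw [length_scenario]; omega)]
  simp only [scenario, List.getElem_ofFn, genome]

lemma isScenario_scenario {G1 G2 : Genome ℕ} (h1 : G1.adj = adjOf n ∅)
    (h2 : G2.adj = adjOf n univ) (c : Equiv.Perm (Fin n)) (hc : IsAltPerm c) :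
    IsScenario G1 G2 (scenario c hc) := by
  rw [isScenario_iff_getD, length_scenario, Nat.add_sub_cancel]
  refine ⟨List.ne_nil_of_length_pos (by rw [length_scenario]; omega), ?_, ?_, fun s hs => ?_⟩
  · ext1; rw [adj_getD_scenario c hc (Nat.zero_le n), opsBefore_zero, h1]
  · ext1; rw [adj_getD_scenario c hc le_rfl, opsBefore_of_le c le_rfl, h2]
  · refine scjStep_iff.mpr ⟨edge (c.symm ⟨s, by omega⟩), ?_⟩
    rw [adj_getD_scenario c hc (by omega), adj_getD_scenario c hc (by omega),
      opsBefore_succ c (by omega), adjOf_insert (symm_notMem_opsBefore c _)]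

lemma scenario_injective {c c' : Equiv.Perm (Fin n)} {hc : IsAltPerm c} {hc' : IsAltPerm c'}
    (h : scenario c hc = scenario c' hc') : c = c' :=
  eq_of_opsBefore_eq fun s hs => adjOf_injective <| by
    rw [← adj_getD_scenario c hc hs, ← adj_getD_scenario c' hc' hs, h]

lemma card_symmDiff_adjOf_empty_univ : #(symmDiff (adjOf n ∅) (adjOf n univ)) = n := by
  rw [symmDiff_adjOf_empty_univ, card_image_of_injective _ edge_injective, card_univ,
    Fintype.card_fin]

lemma dSCJ_eq {G1 G2 : Genome ℕ} (h1 : G1.adj = adjOf n ∅) (h2 : G2.adj = adjOf n univ) :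
    dSCJ G1 G2 = n := by
  have hcard : #(symmDiff G1.adj G2.adj) = n := by rw [h1, h2, card_symmDiff_adjOf_empty_univ]
  obtain ⟨c, hc⟩ := exists_isAltPerm n
  rw [← hcard]
  exact dSCJ_eq_card_symmDiff
    ⟨scenario c hc, isScenario_scenario h1 h2 c hc, by rw [length_scenario, hcard]⟩

lemma exists_adjOf_opsBefore {G1 G2 : Genome ℕ} (h1 : G1.adj = adjOf n ∅)
    (h2 : G2.adj = adjOf n univ) {L : List (Genome ℕ)} (hL : IsScenario G1 G2 L)
    (hlen : L.length = n + 1) :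
    ∃ c : Equiv.Perm (Fin n), ∀ s ≤ n, (L.getD s default).adj = adjOf n (opsBefore c s) := by
  have hcard : #(symmDiff G1.adj G2.adj) = n := by rw [h1, h2, card_symmDiff_adjOf_empty_univ]
  obtain ⟨-, h0, hlast, -⟩ := isScenario_iff_getD.mp hL
  rw [hlen, Nat.add_sub_cancel] at hlast
  obtain ⟨c, hc⟩ := exists_perm_of_insert_chain (n := n) (f := edge)
    (D := fun s => symmDiff G1.adj (L.getD s default).adj)
    (by simp only [h0, symmDiff_self, bot_eq_empty])
    (by simp only [hlast, h1, h2, symmDiff_adjOf_empty_univ])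
    (fun s hs => hL.exists_insert_of_length (by rw [hlen, hcard]) (by omega))
  refine ⟨c, fun s hs => ?_⟩
  rw [adjOf_eq_symmDiff, ← hc s hs, ← h1, symmDiff_symmDiff_cancel_left]

lemma exists_scenario_eq {G1 G2 : Genome ℕ} (h1 : G1.adj = adjOf n ∅)
    (h2 : G2.adj = adjOf n univ) {L : List (Genome ℕ)} (hL : IsScenario G1 G2 L)
    (hlen : L.length = n + 1) :
    ∃ (c : Equiv.Perm (Fin n)) (hc : IsAltPerm c), scenario c hc = L := by
  obtain ⟨c, hc⟩ := exists_adjOf_opsBefore h1 h2 hL hlen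
  have halt : IsAltPerm c := isAltPerm_iff_feasible.mpr fun s hs =>
    isMatching_adjOf_iff.mp (hc s hs ▸ (L.getD s default).disj)
  refine ⟨c, halt, List.ext_getElem (by rw [length_scenario, hlen]) fun s h h' => ?_⟩
  rw [← List.getD_eq_getElem _ default h, ← List.getD_eq_getElem _ default h']
  ext1
  rw [length_scenario] at h
  rw [adj_getD_scenario c halt (by omega), hc s (by omega)]

theorem numMPS_eq_altPermCount {G1 G2 : Genome ℕ} (h1 : G1.adj = adjOf n ∅)
    (h2 : G2.adj = adjOf n univ) : NumMPS G1 G2 = altPermCount n := by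
  have hMPS : ∀ L, IsMPS G1 G2 L ↔ IsScenario G1 G2 L ∧ L.length = n + 1 := fun L => by
    rw [IsMPS, dSCJ_eq h1 h2]
  let f : {c // IsAltPerm c} → {L // IsMPS G1 G2 L} := fun c =>
    ⟨scenario c.1 c.2, (hMPS _).mpr ⟨isScenario_scenario h1 h2 c.1 c.2, length_scenario c.1 c.2⟩⟩
  have hf : Bijective f := by
    refine ⟨fun c c' h => Subtype.ext <|
      scenario_injective (hc := c.2) (hc' := c'.2) (congrArg Subtype.val h), fun L => ?_⟩
    obtain ⟨c, hc, hL⟩ := exists_scenario_eq h1 h2 ((hMPS _).mp L.2).1 ((hMPS _).mp L.2).2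
    exact ⟨⟨c, hc⟩, Subtype.ext hL⟩
  rw [NumMPS, ← Nat.card_coe_set_eq, altPermCount]
  exact (Nat.card_congr (Equiv.ofBijective f hf)).symm

lemma adjOf_empty_eq_image (k : ℕ) :
    adjOf (2 * k - 1) ∅ = (Icc 1 k).image fun t => s(2 * t - 1, 2 * t) := by
  ext x
  simp only [adjOf_empty, evens, edge, mem_image, mem_filter, mem_univ,
    true_and, mem_Icc]
  constructor
  · rintro ⟨j, hj, rfl⟩
    have := j.isLt
    exact ⟨j / 2 + 1, by omega, by simp only [Sym2.eq_iff]; omega⟩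
  · rintro ⟨t, ht, rfl⟩
    exact ⟨⟨2 * t - 2, by omega⟩, by simp only; omega, by simp only [Sym2.eq_iff]; omega⟩

lemma adjOf_univ_eq_image (k : ℕ) :
    adjOf (2 * k - 1) univ = (Icc 1 (k - 1)).image fun t => s(2 * t, 2 * t + 1) := by
  ext x
  simp only [adjOf_univ, edge, mem_image, mem_filter, mem_univ, true_and, mem_Icc]
  constructor
  · rintro ⟨j, hj, rfl⟩
    have := j.isLt
    exact ⟨j / 2 + 1, by omega, by simp only [Sym2.eq_iff]; omega⟩
  · rintro ⟨t, ht, rfl⟩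
    exact ⟨⟨2 * t - 1, by omega⟩, by simp only; omega, by simp only [Sym2.eq_iff]; omega⟩

end MPath

theorem mShaped_count_general (k : ℕ) (G1 G2 : Genome ℕ)
    (h1 : G1.adj = (Finset.Icc 1 k).image fun t => s(2 * t - 1, 2 * t))
    (h2 : G2.adj = (Finset.Icc 1 (k - 1)).image fun t => s(2 * t, 2 * t + 1)) :
    NumMPS G1 G2 = altPermCount (2 * k - 1) :=
  MPath.numMPS_eq_altPermCount (h1.trans (MPath.adjOf_empty_eq_image k).symm)
    (h2.trans (MPath.adjOf_univ_eq_image k).symm)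

/-- For the pair of genomes forming a single M-shaped path with `k ≥ 1`
adjacencies in `G1` (extremities `1, …, 2k`, `Π1 = {{2t-1, 2t} : 1 ≤ t ≤ k}`,
`Π2 = {{2t, 2t+1} : 1 ≤ t ≤ k-1}`), the number of most parsimonious SCJ scenarios from
`G1` to `G2` equals `A (2k-1)`, the number of alternating permutations of size `2k-1`. -/
theorem mShaped_count (k : ℕ) (hk : 1 ≤ k) (G1 G2 : Genome ℕ)
    (h1 : G1.adj = (Finset.Icc 1 k).image fun t => s(2 * t - 1, 2 * t))
    (h2 : G2.adj = (Finset.Icc 1 (k - 1)).image fun t => s(2 * t, 2 * t + 1)) :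
    NumMPS G1 G2 = altPermCount (2 * k - 1) :=
  mShaped_count_general k G1 G2 h1 h2
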